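/- arXiv:math/0211428 — 5 statements merged into one kernel-verified Lean document; each statement's English description precedes it below -/
import Mathlib

section
/- Let n₁, n₂ be positive integers and d₁, d₂ integers, and let m be an integer such that gcd(n₁+n₂, d₁+d₂−m·n₁) = 1. Then α = m is not a critical value for the type (n₁,n₂,d₁,d₂); that is, there exist no integers n₁′, n₂′, d₁′, d₂′ with 0 ≤ n₁′ ≤ n₁, 0 ≤ n₂′ ≤ n₂, (n₁′,n₂′) ≠ (0,0), (n₁′,n₂′,d₁′,d₂′) ≠ (n₁,n₂,d₁,d₂), n₁′·n₂ ≠ n₁·n₂′, and (d₁′+d₂′)/(n₁′+n₂′) + m·n₂′/(n₁′+n₂′) = (d₁+d₂)/(n₁+n₂) + m·n₂/(n₁+n₂). -/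
/-!
Clearing denominators, the critical-value equation at `α = m` says that `n₁ + n₂` divides
`(d₁ + d₂ + m n₂) (n₁' + n₂')`. The first factor differs from `d₁ + d₂ - m n₁` by a multiple of
`n₁ + n₂`, hence is coprime to it, so `n₁ + n₂ ∣ n₁' + n₂'`. Since `0 < n₁' + n₂' ≤ n₁ + n₂`
this forces `(n₁', n₂') = (n₁, n₂)`, contradicting `n₁' n₂ ≠ n₁ n₂'`.
-/

/-- A real number `α` is a critical value for the type `(n₁, n₂, d₁, d₂)` if there exist
integers `n₁', n₂', d₁', d₂'` with `0 ≤ n₁' ≤ n₁`, `0 ≤ n₂' ≤ n₂`, `(n₁', n₂') ≠ (0,0)`,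
`(n₁', n₂', d₁', d₂') ≠ (n₁, n₂, d₁, d₂)`, `n₁' * n₂ ≠ n₁ * n₂'`, and
`(d₁' + d₂')/(n₁' + n₂') + α * n₂'/(n₁' + n₂') = (d₁ + d₂)/(n₁ + n₂) + α * n₂/(n₁ + n₂)`. -/
def IsCriticalValue (n₁ n₂ d₁ d₂ : ℤ) (α : ℝ) : Prop :=
  ∃ n₁' n₂' d₁' d₂' : ℤ,
    0 ≤ n₁' ∧ n₁' ≤ n₁ ∧ 0 ≤ n₂' ∧ n₂' ≤ n₂ ∧
    (n₁', n₂') ≠ (0, 0) ∧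
    (n₁', n₂', d₁', d₂') ≠ (n₁, n₂, d₁, d₂) ∧
    n₁' * n₂ ≠ n₁ * n₂' ∧
    ((d₁' : ℝ) + (d₂' : ℝ)) / ((n₁' : ℝ) + (n₂' : ℝ))
        + α * (n₂' : ℝ) / ((n₁' : ℝ) + (n₂' : ℝ))
      = ((d₁ : ℝ) + (d₂ : ℝ)) / ((n₁ : ℝ) + (n₂ : ℝ))
        + α * (n₂ : ℝ) / ((n₁ : ℝ) + (n₂ : ℝ))

theorem Int.cast_div_eq_cast_div_iff {u p v q : ℤ} (hp : p ≠ 0) (hq : q ≠ 0) :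
    (u : ℝ) / p = v / q ↔ u * q = v * p := by
  rw [div_eq_div_iff (Int.cast_ne_zero.mpr hp) (Int.cast_ne_zero.mpr hq)]
  exact_mod_cast Iff.rfl

theorem isCoprime_add_mul_of_isCoprime_sub_mul {D m a b : ℤ}
    (h : IsCoprime (a + b) (D - m * a)) : IsCoprime (a + b) (D + m * b) := by
  simpa only [show D - m * a + (a + b) * m = D + m * b by ring] using h.add_mul_left_right m

theorem Int.eq_of_dvd_mul_of_isCoprime {N D k : ℤ} (hcop : IsCoprime N D) (hk : 0 < k)
    (hkN : k ≤ N) (hdvd : N ∣ D * k) : k = N :=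
  le_antisymm hkN (Int.le_of_dvd hk (hcop.dvd_of_dvd_mul_left hdvd))

theorem integer_not_critical_value_general
    (n₁ n₂ d₁ d₂ m : ℤ)
    (hgcd : Int.gcd (n₁ + n₂) (d₁ + d₂ - m * n₁) = 1) :
    ¬ IsCriticalValue n₁ n₂ d₁ d₂ (m : ℝ) := by
  rintro ⟨n₁', n₂', d₁', d₂', h₁0, h₁, h₂0, h₂, hnonzero, -, hnotprop, heq⟩
  have hk : 0 < n₁' + n₂' := by
    by_contra!
    exact hnonzero (Prod.ext (by omega) (by omega))
  rw [← add_div, ← add_div] at heq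
  have hcross : (d₁' + d₂' + m * n₂') * (n₁ + n₂) = (d₁ + d₂ + m * n₂) * (n₁' + n₂') :=
    (Int.cast_div_eq_cast_div_iff hk.ne' (by omega)).mp (by exact_mod_cast heq)
  have hcop : IsCoprime (n₁ + n₂) (d₁ + d₂ + m * n₂) :=
    isCoprime_add_mul_of_isCoprime_sub_mul (Int.isCoprime_iff_gcd_eq_one.mpr hgcd)
  have hsum : n₁' + n₂' = n₁ + n₂ :=
    Int.eq_of_dvd_mul_of_isCoprime hcop hk (by omega) ⟨_, hcross.symm.trans (mul_comm _ _)⟩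
  obtain ⟨rfl, rfl⟩ : n₁' = n₁ ∧ n₂' = n₂ := by omega
  exact hnotprop rfl

/-- If `gcd (n₁ + n₂) (d₁ + d₂ - m * n₁) = 1` then the integer `m` is not a critical value
for the type `(n₁, n₂, d₁, d₂)`. -/
theorem integer_not_critical_value
    (n₁ n₂ d₁ d₂ m : ℤ) (hn₁ : 0 < n₁) (hn₂ : 0 < n₂)
    (hgcd : Int.gcd (n₁ + n₂) (d₁ + d₂ - m * n₁) = 1) :
    ¬ IsCriticalValue n₁ n₂ d₁ d₂ (m : ℝ) :=
  integer_not_critical_value_general n₁ n₂ d₁ d₂ m hgcd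
end

section
/- Fix positive integers n₁, n₂ and integers d₁, d₂. The set of critical values for the type (n₁,n₂,d₁,d₂) is a locally finite subset of ℝ: for every pair of real numbers a ≤ b, only finitely many critical values lie in the interval [a,b]. In particular the set of critical values is a discrete subset of ℝ. -/
/-- The set of critical values for the type `(n₁, n₂, d₁, d₂)` is locally finite: only
finitely many critical values lie in any closed interval `[a, b]`.  In particular the set
of critical values is discrete. -/
theorem criticalValues_locallyFinite
    (n₁ n₂ d₁ d₂ : ℤ) (hn₁ : 0 < n₁) (hn₂ : 0 < n₂) (a b : ℝ) (hab : a ≤ b) :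
    {α : ℝ | α ∈ Set.Icc a b ∧ IsCriticalValue n₁ n₂ d₁ d₂ α}.Finite := by
  have hNZ : (0:ℤ) < n₁ + n₂ := by omega
  set N : ℝ := (n₁ : ℝ) + (n₂ : ℝ) with hNdef
  have hN : (0:ℝ) < N := by
    have : ((0:ℤ):ℝ) < ((n₁ + n₂ : ℤ):ℝ) := by exact_mod_cast hNZ
    push_cast at this; linarith
  set C : ℝ := ((d₁ : ℝ) + (d₂ : ℝ)) / N with hCdef
  set M : ℝ := max |a| |b| with hMdef
  set K : ℤ := ⌈N * (|C| + 2 * M)⌉ with hKdef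
  set f : ℤ × ℤ × ℤ → ℝ := fun t =>
    (C - (t.2.2 : ℝ) / ((t.1 : ℝ) + (t.2.1 : ℝ))) /
      ((t.2.1 : ℝ) / ((t.1 : ℝ) + (t.2.1 : ℝ)) - (n₂ : ℝ) / N) with hfdef
  have hfin : (Set.Icc (0:ℤ) n₁ ×ˢ Set.Icc (0:ℤ) n₂ ×ˢ Set.Icc (-K) K).Finite :=
    (Set.finite_Icc _ _).prod ((Set.finite_Icc _ _).prod (Set.finite_Icc _ _))
  apply (hfin.image f).subset
  rintro α ⟨⟨ha, hb⟩, p, q, d1', d2', hp0, hpn, hq0, hqn, hne, -, hcross, heq⟩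
  have hpq : (0:ℤ) < p + q := by
    rcases eq_or_ne p 0 with hp | hp
    · rcases eq_or_ne q 0 with hq | hq
      · exact absurd (by simp [hp, hq]) hne
      · omega
    · omega
  have hPq : (0:ℝ) < (p : ℝ) + (q : ℝ) := by
    have : ((0:ℤ):ℝ) < ((p + q : ℤ):ℝ) := by exact_mod_cast hpq
    push_cast at this; linarith
  set Pq : ℝ := (p : ℝ) + (q : ℝ) with hPqdef
  -- the slope is nonzero
  have hD : (q : ℝ) / Pq - (n₂ : ℝ) / N ≠ 0 := by
    intro h0
    apply hcross
    have h1 : (q : ℝ) * N = (n₂ : ℝ) * Pq := by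
      field_simp at h0
      linarith
    have h2 : (p : ℝ) * (n₂ : ℝ) = (n₁ : ℝ) * (q : ℝ) := by
      rw [hNdef, hPqdef] at h1; ring_nf at h1 ⊢; linarith
    exact_mod_cast h2
  -- α bounds
  have hαM : |α| ≤ M := abs_le_max_abs_abs ha hb
  have hM0 : 0 ≤ M := le_trans (abs_nonneg α) hαM
  have hs : ((d1' + d2' : ℤ) : ℝ) / Pq = C + α * (n₂ : ℝ) / N - α * (q : ℝ) / Pq := by
    push_cast
    linarith [heq]
  -- solve for α
  refine ⟨(p, q, d1' + d2'), ⟨⟨hp0, hpn⟩, ⟨hq0, hqn⟩, ?_⟩, ?_⟩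
  · -- bound on s := d1' + d2'
    have h1 : |α * (n₂ : ℝ) / N| ≤ M := by
      rw [abs_div, abs_mul]
      rw [abs_of_pos hN]
      rw [div_le_iff₀ hN]
      have hn2 : |(n₂ : ℝ)| ≤ N := by
        rw [abs_of_nonneg (by exact_mod_cast hn₂.le)]
        have : (0:ℝ) ≤ (n₁:ℝ) := by exact_mod_cast hn₁.le
        simp [hNdef]; linarith
      calc |α| * |(n₂:ℝ)| ≤ M * N := mul_le_mul hαM hn2 (abs_nonneg _) hM0
        _ = M * N := rfl
    have h2 : |α * (q : ℝ) / Pq| ≤ M := by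
      rw [abs_div, abs_mul, abs_of_pos hPq, div_le_iff₀ hPq]
      have hq' : |(q : ℝ)| ≤ Pq := by
        rw [abs_of_nonneg (by exact_mod_cast hq0)]
        have : (0:ℝ) ≤ (p:ℝ) := by exact_mod_cast hp0
        simp [hPqdef]; linarith
      exact mul_le_mul hαM hq' (abs_nonneg _) hM0
    have hbound : |((d1' + d2' : ℤ) : ℝ)| ≤ N * (|C| + 2 * M) := by
      have h3 : |((d1' + d2' : ℤ) : ℝ) / Pq| ≤ |C| + 2 * M := by
        rw [hs]
        calc |C + α * (n₂ : ℝ) / N - α * (q : ℝ) / Pq|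
            ≤ |C| + |α * (n₂ : ℝ) / N| + |α * (q : ℝ) / Pq| := by
              apply (abs_sub _ _).trans
              gcongr
              exact abs_add_le _ _
          _ ≤ |C| + 2 * M := by linarith
      have h4 : |((d1' + d2' : ℤ) : ℝ)| = |((d1' + d2' : ℤ) : ℝ) / Pq| * Pq := by
        rw [abs_div, abs_of_pos hPq, div_mul_cancel₀]
        exact hPq.ne'
      rw [h4]
      have hPqN : Pq ≤ N := by
        have : (p:ℝ) ≤ n₁ := by exact_mod_cast hpn
        have : (q:ℝ) ≤ n₂ := by exact_mod_cast hqn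
        simp only [hPqdef, hNdef]
        have hp' : (p:ℝ) ≤ n₁ := by exact_mod_cast hpn
        linarith
      calc |((d1' + d2' : ℤ) : ℝ) / Pq| * Pq ≤ (|C| + 2 * M) * Pq := by
            apply mul_le_mul_of_nonneg_right h3 hPq.le
        _ ≤ (|C| + 2 * M) * N := by
            apply mul_le_mul_of_nonneg_left hPqN (by positivity)
        _ = N * (|C| + 2 * M) := by ring
    have hKB : N * (|C| + 2 * M) ≤ (K : ℝ) := Int.le_ceil _
    rw [abs_le] at hbound
    constructor
    · have : -(K:ℝ) ≤ ((d1' + d2' : ℤ):ℝ) := by linarith [hbound.1]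
      exact_mod_cast this
    · exact_mod_cast le_trans hbound.2 hKB
  · -- f t = α
    show (C - ((d1' + d2' : ℤ):ℝ) / Pq) / ((q:ℝ) / Pq - (n₂:ℝ) / N) = α
    rw [div_eq_iff hD]
    have hr : α * ((q:ℝ) / Pq - (n₂:ℝ) / N) = α * (q:ℝ) / Pq - α * (n₂:ℝ) / N := by
      ring
    rw [hr]
    linarith [hs]
end

section
/- Let V′₁, V′₂, V″₁, V″₂ be finite-dimensional complex vector spaces with V′₁ ⊕ V′₂ ≠ 0 and V″₁ ⊕ V″₂ ≠ 0, let c′ : V′₂ → V′₁ and c″ : V″₂ → V″₁ be linear maps, and let f : Hom(V″₁,V′₁) ⊕ Hom(V″₂,V′₂) → Hom(V″₂,V′₁) be the linear map f(ψ₁,ψ₂) = c′ ∘ ψ₂ − ψ₁ ∘ c″. If f is a linear isomorphism, then exactly one of the following three alternatives occurs: (1) V′₁ = 0, V″₂ = 0, c′ = 0 and c″ = 0; (2) V″₁ = 0, the spaces V′₁, V′₂, V″₂ are all nonzero, and c′ : V′₂ → V′₁ is an isomorphism; (3) V′₂ = 0, the spaces V′₁, V″₁, V″₂ are all nonzero,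 and c″ : V″₂ → V″₁ is an isomorphism. -/
/-!
Write `f(ψ₁, ψ₂) = c' ∘ ψ₂ - ψ₁ ∘ c''`. Injectivity of `f` on pairs `(0, ψ₂)` and `(ψ₁, 0)`
forces `c'` to be injective as soon as `V''₂ ≠ 0` and `c''` to be surjective as soon as `V'₁ ≠ 0`.
So if `V''₂ = 0`, then `V'₁ = 0` (else `V''₁ = c''(V''₂) = 0`): case (1). Otherwise, if `V''₁ = 0` then `f` is `ψ₂ ↦ c' ∘ ψ₂`,
and its surjectivity makes `c'` surjective. If `V''₁ ≠ 0`, every `φ : V''₁ → V'₂` gives the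
kernel element `(c' ∘ φ, φ ∘ c'')` of `f`, so `φ ∘ c'' = 0` and hence `φ = 0`, i.e. `V'₂ = 0`;
then `f` is `ψ₁ ↦ -ψ₁ ∘ c''`, and its surjectivity makes `c''` injective.
-/

open Function LinearMap

section VectorSpace

variable {K M N P : Type*} [Field K] [AddCommGroup M] [Module K M] [AddCommGroup N] [Module K N]
  [AddCommGroup P] [Module K P]

theorem LinearMap.exists_apply_eq_of_ne_zero {m : M} (hm : m ≠ 0) (n : N) :
    ∃ g : M →ₗ[K] N, g m = n := by
  obtain ⟨φ, hφ⟩ := Module.Projective.exists_dual_eq_one K hm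
  exact ⟨φ.smulRight n, by simp [hφ]⟩

instance LinearMap.nontrivial_of_nontrivial [Nontrivial M] [Nontrivial N] :
    Nontrivial (M →ₗ[K] N) := by
  obtain ⟨m, hm⟩ := exists_ne (0 : M)
  obtain ⟨n, hn⟩ := exists_ne (0 : N)
  obtain ⟨g, hg⟩ := exists_apply_eq_of_ne_zero (K := K) hm n
  exact ⟨g, 0, fun h => hn (by rw [← hg, h, zero_apply])⟩

theorem LinearMap.surjective_of_comp_eq_zero [Nontrivial P] {c : M →ₗ[K] N}
    (h : ∀ g : N →ₗ[K] P, g ∘ₗ c = 0 → g = 0) : Surjective c := by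
  rw [← range_eq_top]
  by_contra hc
  have : Nontrivial (N ⧸ range c) := Submodule.Quotient.nontrivial_iff.mpr hc
  obtain ⟨g, hg⟩ := exists_ne (0 : N ⧸ range c →ₗ[K] P)
  refine hg ((cancel_right (range c).mkQ_surjective).mp ?_)
  rw [zero_comp]
  exact h _ (by rw [comp_assoc, range_mkQ_comp, comp_zero])

theorem LinearMap.injective_of_comp_eq_zero [Nontrivial P] {c : M →ₗ[K] N}
    (h : ∀ g : P →ₗ[K] M, c ∘ₗ g = 0 → g = 0) : Injective c := by
  rw [← ker_eq_bot]
  by_contra hc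
  have : Nontrivial (ker c) := Submodule.nontrivial_iff_ne_bot.mpr hc
  obtain ⟨g, hg⟩ := exists_ne (0 : P →ₗ[K] ker c)
  refine hg ((cancel_left (ker c).injective_subtype).mp ?_)
  rw [comp_zero]
  exact h _ (by rw [← comp_assoc, comp_ker_subtype, zero_comp])

theorem LinearMap.surjective_of_forall_exists_comp_eq [Nontrivial P] {c : M →ₗ[K] N}
    (h : ∀ θ : P →ₗ[K] N, ∃ ψ : P →ₗ[K] M, c ∘ₗ ψ = θ) : Surjective c := by
  intro n
  obtain ⟨p, hp⟩ := exists_ne (0 : P)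
  obtain ⟨θ, rfl⟩ := exists_apply_eq_of_ne_zero (K := K) hp n
  obtain ⟨ψ, rfl⟩ := h θ
  exact ⟨ψ p, rfl⟩

theorem LinearMap.injective_of_forall_exists_comp_eq [Nontrivial P] {c : M →ₗ[K] N}
    (h : ∀ θ : M →ₗ[K] P, ∃ ψ : N →ₗ[K] P, ψ ∘ₗ c = θ) : Injective c := by
  rw [← ker_eq_bot, Submodule.eq_bot_iff]
  intro m hm
  by_contra hm0
  obtain ⟨p, hp⟩ := exists_ne (0 : P)
  obtain ⟨θ, hθ⟩ := exists_apply_eq_of_ne_zero (K := K) hm0 p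
  obtain ⟨ψ, rfl⟩ := h θ
  exact hp (by rw [← hθ, comp_apply, mem_ker.mp hm, map_zero])

end VectorSpace

section SylvesterMap

variable {K V₁ V₂ W₁ W₂ : Type*} [Field K] [AddCommGroup V₁] [Module K V₁]
  [AddCommGroup V₂] [Module K V₂] [AddCommGroup W₁] [Module K W₁] [AddCommGroup W₂] [Module K W₂]

def sylvesterMap (c' : V₂ →ₗ[K] V₁) (c'' : W₂ →ₗ[K] W₁)
    (ψ : (W₁ →ₗ[K] V₁) × (W₂ →ₗ[K] V₂)) : W₂ →ₗ[K] V₁ :=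
  c' ∘ₗ ψ.2 - ψ.1 ∘ₗ c''

variable {c' : V₂ →ₗ[K] V₁} {c'' : W₂ →ₗ[K] W₁}

theorem eq_zero_of_comp_eq_comp_of_injective_sylvesterMap (hf : Injective (sylvesterMap c' c''))
    {ψ₁ : W₁ →ₗ[K] V₁} {ψ₂ : W₂ →ₗ[K] V₂} (h : c' ∘ₗ ψ₂ = ψ₁ ∘ₗ c'') : ψ₁ = 0 ∧ ψ₂ = 0 :=
  Prod.ext_iff.mp (hf (by simp [sylvesterMap, h]) : (ψ₁, ψ₂) = 0)

theorem injective_left_of_injective_sylvesterMap [Nontrivial W₂]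
    (hf : Injective (sylvesterMap c' c'')) : Injective c' :=
  injective_of_comp_eq_zero fun _ hψ₂ =>
    (eq_zero_of_comp_eq_comp_of_injective_sylvesterMap hf (ψ₁ := 0) (by rw [hψ₂, zero_comp])).2

theorem surjective_right_of_injective_sylvesterMap [Nontrivial V₁]
    (hf : Injective (sylvesterMap c' c'')) : Surjective c'' :=
  surjective_of_comp_eq_zero fun _ hψ₁ =>
    (eq_zero_of_comp_eq_comp_of_injective_sylvesterMap hf (ψ₂ := 0) (by rw [hψ₁, comp_zero])).1

theorem subsingleton_of_injective_sylvesterMap [Nontrivial W₁]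
    (hf : Injective (sylvesterMap c' c'')) (hc'' : Surjective c'') : Subsingleton V₂ := by
  refine not_nontrivial_iff_subsingleton.mp fun _ => ?_
  obtain ⟨φ, hφ⟩ := exists_ne (0 : W₁ →ₗ[K] V₂)
  have hφc'' : φ ∘ₗ c'' = 0 :=
    (eq_zero_of_comp_eq_comp_of_injective_sylvesterMap hf (comp_assoc c'' φ c').symm).2
  exact hφ ((cancel_right hc'').mp (hφc''.trans (zero_comp c'').symm))

theorem surjective_left_of_surjective_sylvesterMap [Subsingleton W₁] [Nontrivial W₂]
    (hf : Surjective (sylvesterMap c' c'')) : Surjective c' :=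
  surjective_of_forall_exists_comp_eq fun θ => by
    obtain ⟨ψ, rfl⟩ := hf θ
    exact ⟨ψ.2, by simp [sylvesterMap, Subsingleton.elim c'' 0]⟩

theorem injective_right_of_surjective_sylvesterMap [Subsingleton V₂] [Nontrivial V₁]
    (hf : Surjective (sylvesterMap c' c'')) : Injective c'' :=
  injective_of_forall_exists_comp_eq fun θ => by
    obtain ⟨ψ, rfl⟩ := hf θ
    exact ⟨-ψ.1, by simp [sylvesterMap, Subsingleton.elim c' 0]⟩

end SylvesterMap

theorem linear_algebra_lemma_trichotomy_general
    (V'₁ V'₂ V''₁ V''₂ : Type*)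
    [AddCommGroup V'₁] [Module ℂ V'₁]
    [AddCommGroup V'₂] [Module ℂ V'₂]
    [AddCommGroup V''₁] [Module ℂ V''₁]
    [AddCommGroup V''₂] [Module ℂ V''₂]
    (hV' : Nontrivial (V'₁ × V'₂)) (hV'' : Nontrivial (V''₁ × V''₂))
    (c' : V'₂ →ₗ[ℂ] V'₁) (c'' : V''₂ →ₗ[ℂ] V''₁)
    (hf : Function.Bijective
      (fun p : (V''₁ →ₗ[ℂ] V'₁) × (V''₂ →ₗ[ℂ] V'₂) => c' ∘ₗ p.2 - p.1 ∘ₗ c'')) :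
    let A := Subsingleton V'₁ ∧ Subsingleton V''₂ ∧ c' = 0 ∧ c'' = 0
    let B := Subsingleton V''₁ ∧ Nontrivial V'₁ ∧ Nontrivial V'₂ ∧ Nontrivial V''₂ ∧
      Function.Bijective c'
    let C := Subsingleton V'₂ ∧ Nontrivial V'₁ ∧ Nontrivial V''₁ ∧ Nontrivial V''₂ ∧
      Function.Bijective c''
    (A ∧ ¬B ∧ ¬C) ∨ (¬A ∧ B ∧ ¬C) ∨ (¬A ∧ ¬B ∧ C) := by
  intro A B C
  have hinj : Injective (sylvesterMap c' c'') := hf.1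
  have hsurj : Surjective (sylvesterMap c' c'') := hf.2
  rcases subsingleton_or_nontrivial V''₂ with hW₂ | hW₂
  · have hW₁ : Nontrivial V''₁ := (Prod.fst_injective (β := V''₂)).nontrivial
    have hV₁ : Subsingleton V'₁ := not_nontrivial_iff_subsingleton.mp fun _ =>
      not_nontrivial V''₂ (surjective_right_of_injective_sylvesterMap hinj).nontrivial
    exact Or.inl ⟨⟨hV₁, hW₂, Subsingleton.elim _ _, Subsingleton.elim _ _⟩,
      fun hB => not_nontrivial V''₂ hB.2.2.2.1, fun hC => not_nontrivial V''₂ hC.2.2.2.1⟩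
  have hc' := injective_left_of_injective_sylvesterMap hinj
  have hV₁ : Nontrivial V'₁ := not_subsingleton_iff_nontrivial.mp fun _ =>
    have := hc'.subsingleton
    not_nontrivial (V'₁ × V'₂) hV'
  have hc'' := surjective_right_of_injective_sylvesterMap hinj
  rcases subsingleton_or_nontrivial V''₁ with hW₁ | hW₁
  · have hc'surj := surjective_left_of_surjective_sylvesterMap hsurj
    exact Or.inr (Or.inl ⟨fun hA => not_subsingleton V'₁ hA.1,
      ⟨hW₁, hV₁, hc'surj.nontrivial, hW₂, hc', hc'surj⟩, fun hC => not_nontrivial V''₁ hC.2.2.1⟩)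
  · have hV₂ := subsingleton_of_injective_sylvesterMap hinj hc''
    have hc''inj := injective_right_of_surjective_sylvesterMap hsurj
    exact Or.inr (Or.inr ⟨fun hA => not_subsingleton V'₁ hA.1, fun hB => not_subsingleton V''₁ hB.1,
      ⟨hV₂, hV₁, hW₁, hW₂, hc''inj, hc''⟩⟩)

/-- Suppose `V'₁ ⊕ V'₂ ≠ 0` and `V''₁ ⊕ V''₂ ≠ 0` are finite-dimensional complex vector
spaces, `c' : V'₂ → V'₁` and `c'' : V''₂ → V''₁` are linear maps, and
`f : Hom(V''₁, V'₁) ⊕ Hom(V''₂, V'₂) → Hom(V''₂, V'₁)`, `f(ψ₁, ψ₂) = c' ∘ ψ₂ - ψ₁ ∘ c''`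
is a (linear) isomorphism.  Then exactly one of the following alternatives occurs:
(1) `V'₁ = V''₂ = 0` and `c' = c'' = 0`;
(2) `V''₁ = 0`, `V'₁, V'₂, V''₂` are all nonzero, and `c'` is an isomorphism;
(3) `V'₂ = 0`, `V'₁, V''₁, V''₂` are all nonzero, and `c''` is an isomorphism. -/
theorem linear_algebra_lemma_trichotomy
    (V'₁ V'₂ V''₁ V''₂ : Type*)
    [AddCommGroup V'₁] [Module ℂ V'₁] [FiniteDimensional ℂ V'₁]
    [AddCommGroup V'₂] [Module ℂ V'₂] [FiniteDimensional ℂ V'₂]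
    [AddCommGroup V''₁] [Module ℂ V''₁] [FiniteDimensional ℂ V''₁]
    [AddCommGroup V''₂] [Module ℂ V''₂] [FiniteDimensional ℂ V''₂]
    (hV' : Nontrivial (V'₁ × V'₂)) (hV'' : Nontrivial (V''₁ × V''₂))
    (c' : V'₂ →ₗ[ℂ] V'₁) (c'' : V''₂ →ₗ[ℂ] V''₁)
    (hf : Function.Bijective
      (fun p : (V''₁ →ₗ[ℂ] V'₁) × (V''₂ →ₗ[ℂ] V'₂) => c' ∘ₗ p.2 - p.1 ∘ₗ c'')) :
    let A := Subsingleton V'₁ ∧ Subsingleton V''₂ ∧ c' = 0 ∧ c'' = 0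
    let B := Subsingleton V''₁ ∧ Nontrivial V'₁ ∧ Nontrivial V'₂ ∧ Nontrivial V''₂ ∧
      Function.Bijective c'
    let C := Subsingleton V'₂ ∧ Nontrivial V'₁ ∧ Nontrivial V''₁ ∧ Nontrivial V''₂ ∧
      Function.Bijective c''
    (A ∧ ¬B ∧ ¬C) ∨ (¬A ∧ B ∧ ¬C) ∨ (¬A ∧ ¬B ∧ C) :=
  linear_algebra_lemma_trichotomy_general V'₁ V'₂ V''₁ V''₂ hV' hV'' c' c'' hf
end

section
/- Let V′₁, V′₂, V″₁, V″₂ be finite-dimensional complex vector spaces that are all nonzero, let c′ : V′₂ → V′₁ and c″ : V″₂ → V″₁ be linear maps, and let f : Hom(V″₁,V′₁) ⊕ Hom(V″₂,V′₂) → Hom(V″₂,V′₁) be the linear map f(ψ₁,ψ₂) = c′ ∘ ψ₂ − ψ₁ ∘ c″. Then f is not a linear isomorphism. -/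
/-- Given a nonzero vector `x` in a f.d. complex vector space and any target vector `y`,
there is a linear map sending `x` to `y`. -/
lemma exists_linearMap_apply_eq (A B : Type*)
    [AddCommGroup A] [Module ℂ A] [FiniteDimensional ℂ A]
    [AddCommGroup B] [Module ℂ B]
    (x : A) (hx : x ≠ 0) (y : B) : ∃ g : A →ₗ[ℂ] B, g x = y := by
  obtain ⟨φ, hφ⟩ : ∃ φ : A →ₗ[ℂ] ℂ, φ x ≠ 0 := by
    by_contra h
    push_neg at h
    exact hx ((Module.forall_dual_apply_eq_zero_iff ℂ x).mp h)
  refine ⟨LinearMap.toSpanSingleton ℂ B ((φ x)⁻¹ • y) ∘ₗ φ, ?_⟩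
  simp [LinearMap.toSpanSingleton_apply, smul_smul, mul_inv_cancel₀ hφ]

/-- If the finite-dimensional complex vector spaces `V'₁, V'₂, V''₁, V''₂` are all nonzero,
then the linear map `f : Hom(V''₁, V'₁) ⊕ Hom(V''₂, V'₂) → Hom(V''₂, V'₁)`,
`f(ψ₁, ψ₂) = c' ∘ ψ₂ - ψ₁ ∘ c''`, cannot be an isomorphism. -/
theorem linear_algebra_lemma_not_bijective
    (V'₁ V'₂ V''₁ V''₂ : Type*)
    [AddCommGroup V'₁] [Module ℂ V'₁] [FiniteDimensional ℂ V'₁]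
    [AddCommGroup V'₂] [Module ℂ V'₂] [FiniteDimensional ℂ V'₂]
    [AddCommGroup V''₁] [Module ℂ V''₁] [FiniteDimensional ℂ V''₁]
    [AddCommGroup V''₂] [Module ℂ V''₂] [FiniteDimensional ℂ V''₂]
    [Nontrivial V'₁] [Nontrivial V'₂] [Nontrivial V''₁] [Nontrivial V''₂]
    (c' : V'₂ →ₗ[ℂ] V'₁) (c'' : V''₂ →ₗ[ℂ] V''₁) :
    ¬ Function.Bijective
      (fun p : (V''₁ →ₗ[ℂ] V'₁) × (V''₂ →ₗ[ℂ] V'₂) => c' ∘ₗ p.2 - p.1 ∘ₗ c'') := by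
  intro hbij
  -- For any `g : V''₁ →ₗ V'₂`, the pair `(c' ∘ g, g ∘ c'')` is in the kernel of the map.
  have hker : ∀ g : V''₁ →ₗ[ℂ] V'₂,
      (fun p : (V''₁ →ₗ[ℂ] V'₁) × (V''₂ →ₗ[ℂ] V'₂) => c' ∘ₗ p.2 - p.1 ∘ₗ c'')
        (c' ∘ₗ g, g ∘ₗ c'')
      = (fun p : (V''₁ →ₗ[ℂ] V'₁) × (V''₂ →ₗ[ℂ] V'₂) => c' ∘ₗ p.2 - p.1 ∘ₗ c'') (0, 0) := by
    intro g
    simp [LinearMap.comp_assoc]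
  by_cases hc' : c' = 0
  · by_cases hc'' : c'' = 0
    · -- the map is identically zero, but the codomain is nontrivial
      obtain ⟨u, hu⟩ := exists_ne (0 : V''₂)
      obtain ⟨w, hw⟩ := exists_ne (0 : V'₁)
      obtain ⟨φ, hφ⟩ := exists_linearMap_apply_eq V''₂ V'₁ u hu w
      obtain ⟨p, hp⟩ := hbij.2 φ
      simp only [hc', hc''] at hp
      rw [LinearMap.zero_comp, LinearMap.comp_zero, sub_zero] at hp
      rw [← hp] at hφ
      simp at hφ
      exact hw hφ.symm
    · -- c'' ≠ 0 : find g with g ∘ c'' ≠ 0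
      obtain ⟨u, hu⟩ := DFunLike.ne_iff.mp hc''
      obtain ⟨v, hv⟩ := exists_ne (0 : V'₂)
      obtain ⟨g, hg⟩ := exists_linearMap_apply_eq V''₁ V'₂ (c'' u) (by simpa using hu) v
      have := hbij.1 (hker g)
      have h2 : g ∘ₗ c'' = 0 := by
        have := congrArg Prod.snd this
        simpa using this
      have : (g ∘ₗ c'') u = 0 := by rw [h2]; rfl
      rw [LinearMap.comp_apply, hg] at this
      exact hv this
  · -- c' ≠ 0 : find g with c' ∘ g ≠ 0
    obtain ⟨v, hv⟩ := DFunLike.ne_iff.mp hc'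
    obtain ⟨u, hu⟩ := exists_ne (0 : V''₁)
    obtain ⟨g, hg⟩ := exists_linearMap_apply_eq V''₁ V'₂ u hu v
    have := hbij.1 (hker g)
    have h1 : c' ∘ₗ g = 0 := by
      have := congrArg Prod.fst this
      simpa using this
    have : (c' ∘ₗ g) u = 0 := by rw [h1]; rfl
    rw [LinearMap.comp_apply, hg] at this
    simp at hv
    exact hv this
end

section
/- Let n₁ ≥ n₂ ≥ 1 be integers, let k be an integer with 1 ≤ k ≤ n₂, and let μ₁, μ₂, μ_N, α be real numbers. Set μ = (n₁·μ₁ + n₂·μ₂)/(n₁+n₂). Assume that (i) α·n₁ ≤ (n₁+n₂)·(μ − μ_N), and (ii) (2n₂·μ₂ − k·μ_N)/(2n₂−k) + α·n₂/(2n₂−k) ≤ μ + α·n₂/(n₁+n₂). Then α ≤ 2n₁n₂·(μ₁−μ₂)/(n₂(n₁−n₂) + k(n₁+n₂)). (This is the quantitative content of the bound on the rank of the kernel of φ for an α-semistable triple: inequality (i) is the α-semistability condition applied to the subtriple (0,N,0) with N = ker φ of rank k and slope μ_N, and inequality (ii) is the α-semistability condition applied to the subtriple (im φ, E₂, φ).)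 -/
/-! Both semistability inequalities are linear in `α`, `μ_N` and the slopes. Clearing the
positive denominators `n₁ + n₂` and `2n₂ - k`, adding `k` times (i) to (ii) eliminates `μ_N`,
and since `μ - μ₂ = n₁(μ₁ - μ₂)/(n₁ + n₂)` what remains is
`α (n₂(n₁ - n₂) + k(n₁ + n₂)) ≤ 2n₁n₂(μ₁ - μ₂)`. -/

namespace KernelRankBound

variable {a b k μ₁ μ₂ μ μN α : ℝ}

lemma sub_right_eq_of_eq_weighted_mean (hN : 0 < a + b) (hμ : μ = (a * μ₁ + b * μ₂) / (a + b)) :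
    μ - μ₂ = a * (μ₁ - μ₂) / (a + b) := by
  subst hμ
  field_simp
  ring

lemma le_sub_of_mul_le_mul_sub (hN : 0 < a + b) (h : α * a ≤ (a + b) * (μ - μN)) :
    μN ≤ μ - α * a / (a + b) := by
  rw [mul_comm (a + b)] at h
  have := (div_le_iff₀ hN).2 h
  linarith

lemma le_mul_of_div_add_div_le (hD : 0 < 2 * b - k)
    (h : (2 * b * μ₂ - k * μN) / (2 * b - k) + α * b / (2 * b - k) ≤ μ + α * b / (a + b)) :
    2 * b * μ₂ - k * μN + α * b ≤ (2 * b - k) * (μ + α * b / (a + b)) := by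
  rw [← add_div, div_le_iff₀ hD] at h
  linarith

lemma mul_le_of_semistable (hN : 0 < a + b) (hk : 0 ≤ k)
    (hμ : μ = (a * μ₁ + b * μ₂) / (a + b))
    (h₁ : μN ≤ μ - α * a / (a + b))
    (h₂ : 2 * b * μ₂ - k * μN + α * b ≤ (2 * b - k) * (μ + α * b / (a + b))) :
    α * (b * (a - b) + k * (a + b)) ≤ 2 * a * b * (μ₁ - μ₂) := by
  have hμ₂ := sub_right_eq_of_eq_weighted_mean hN hμ
  have hcomb : α * (b * (a - b) + k * (a + b)) / (a + b) ≤ 2 * b * (μ - μ₂) := by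
    have hα : α * (b * (a - b) + k * (a + b)) / (a + b)
        = α * b + k * (α * a / (a + b)) - (2 * b - k) * (α * b / (a + b)) := by
      field_simp
      ring
    rw [hα]
    linarith [mul_le_mul_of_nonneg_left h₁ hk]
  rw [hμ₂, mul_div_assoc', div_le_div_iff_of_pos_right hN] at hcomb
  linarith

end KernelRankBound

open KernelRankBound in
/-- Quantitative content of the bound on the rank of the kernel of `φ` for an
`α`-semistable triple: if `n₁ ≥ n₂ ≥ 1`, `1 ≤ k ≤ n₂`, `μ = (n₁μ₁ + n₂μ₂)/(n₁+n₂)`,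
(i) `α n₁ ≤ (n₁+n₂)(μ - μ_N)` and
(ii) `(2n₂μ₂ - kμ_N)/(2n₂-k) + αn₂/(2n₂-k) ≤ μ + αn₂/(n₁+n₂)`,
then `α ≤ 2n₁n₂(μ₁-μ₂)/(n₂(n₁-n₂) + k(n₁+n₂))`. -/
theorem kernel_rank_bound
    (n₁ n₂ k : ℤ) (hn : n₁ ≥ n₂) (hn₂ : n₂ ≥ 1) (hk₁ : 1 ≤ k) (hk₂ : k ≤ n₂)
    (μ₁ μ₂ μN α : ℝ)
    (μ : ℝ) (hμ : μ = ((n₁ : ℝ) * μ₁ + (n₂ : ℝ) * μ₂) / ((n₁ : ℝ) + (n₂ : ℝ)))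
    (h1 : α * (n₁ : ℝ) ≤ ((n₁ : ℝ) + (n₂ : ℝ)) * (μ - μN))
    (h2 : (2 * (n₂ : ℝ) * μ₂ - (k : ℝ) * μN) / (2 * (n₂ : ℝ) - (k : ℝ))
        + α * (n₂ : ℝ) / (2 * (n₂ : ℝ) - (k : ℝ))
      ≤ μ + α * (n₂ : ℝ) / ((n₁ : ℝ) + (n₂ : ℝ))) :
    α ≤ 2 * (n₁ : ℝ) * (n₂ : ℝ) * (μ₁ - μ₂)
        / ((n₂ : ℝ) * ((n₁ : ℝ) - (n₂ : ℝ)) + (k : ℝ) * ((n₁ : ℝ) + (n₂ : ℝ))) := by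
  have hn' : (n₂ : ℝ) ≤ n₁ := by exact_mod_cast hn
  have hn₂' : (1 : ℝ) ≤ n₂ := by exact_mod_cast hn₂
  have hk₁' : (1 : ℝ) ≤ k := by exact_mod_cast hk₁
  have hk₂' : (k : ℝ) ≤ n₂ := by exact_mod_cast hk₂
  have hN : (0 : ℝ) < n₁ + n₂ := by linarith
  have hD : (0 : ℝ) < 2 * n₂ - k := by linarith
  have hden : (0 : ℝ) < n₂ * (n₁ - n₂) + k * (n₁ + n₂) := by nlinarith
  rw [le_div_iff₀ hden]
  exact mul_le_of_semistable hN (by linarith) hμ (le_sub_of_mul_le_mul_sub hN h1)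
    (le_mul_of_div_add_div_le hD h2)
end
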